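/- Let {τ_α}_{α∈Ω} be a normalized continuous Bessel family for a d-dimensional Hilbert space H with measurable diagonal Δ. Then the continuous frame potential FP := ∫_Ω ∫_Ω |⟨τ_α, τ_β⟩|² dμ(α) dμ(β) satisfies max{μ(Ω)²/d, (μ×μ)(Δ)} ≤ FP ≤ μ(Ω)². -/

import Mathlib

open MeasureTheory
open scoped InnerProductSpace ENNReal ComplexConjugate

/-!
Fix an orthonormal basis `(e_i)` of `H` and put `G i j = ∫ ⟪τ α, e i⟫ ⟪e j, τ α⟫ dμ(α)`, the
matrix of the frame operator. Expanding `|⟪τ α, τ β⟫|²` in the basis and integrating with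
Fubini gives `FP = ∑ i j, |G i j|²`, while `∑ i, G i i = ∫ ‖τ α‖² = μ(Ω)`; Cauchy–Schwarz on the
diagonal of `G` then yields `μ(Ω)² ≤ d · FP`. The integrand is `1` on the diagonal `Δ` and at
most `1` everywhere, which gives the other two bounds. Finiteness of `μ` comes from the Bessel
bound applied to the basis vectors: `μ(Ω) = ∫ ∑ i, |⟪e i, τ α⟫|² ≤ d · b`.
-/

noncomputable def framePotential {Ω H : Type*} (𝕜 : Type*) [RCLike 𝕜] [NormedAddCommGroup H]
    [InnerProductSpace 𝕜 H] [MeasurableSpace Ω] (μ : Measure Ω) (τ : Ω → H) : ℝ :=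
  ∫ α, ∫ β, ‖⟪τ α, τ β⟫_𝕜‖ ^ 2 ∂μ ∂μ

theorem OrthonormalBasis.norm_inner_sq_eq_sum {𝕜 H ι : Type*} [RCLike 𝕜] [NormedAddCommGroup H]
    [InnerProductSpace 𝕜 H] [Fintype ι] (b : OrthonormalBasis ι 𝕜 H) (x y : H) :
    (‖⟪x, y⟫_𝕜‖ ^ 2 : 𝕜) =
      ∑ i, ∑ j, ⟪x, b i⟫_𝕜 * ⟪b j, x⟫_𝕜 * conj (⟪y, b i⟫_𝕜 * ⟪b j, y⟫_𝕜) := by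
  calc (‖⟪x, y⟫_𝕜‖ ^ 2 : 𝕜) = ⟪x, y⟫_𝕜 * ⟪y, x⟫_𝕜 := by
        rw [← RCLike.mul_conj, inner_conj_symm]
    _ = (∑ i, ⟪x, b i⟫_𝕜 * ⟪b i, y⟫_𝕜) * ∑ j, ⟪y, b j⟫_𝕜 * ⟪b j, x⟫_𝕜 := by
        rw [b.sum_inner_mul_inner, b.sum_inner_mul_inner]
    _ = _ := by
        rw [Finset.sum_mul_sum]
        refine Finset.sum_congr rfl fun i _ => Finset.sum_congr rfl fun j _ => ?_
        simp only [map_mul, inner_conj_symm]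
        ring

theorem norm_inner_le_of_forall_norm_le {𝕜 H Ω : Type*} [RCLike 𝕜] [NormedAddCommGroup H]
    [InnerProductSpace 𝕜 H] {τ : Ω → H} {C : ℝ} (hC : ∀ α, ‖τ α‖ ≤ C) (α β : Ω) :
    ‖⟪τ α, τ β⟫_𝕜‖ ≤ C ^ 2 :=
  calc ‖⟪τ α, τ β⟫_𝕜‖ ≤ ‖τ α‖ * ‖τ β‖ := norm_inner_le_norm _ _
    _ ≤ C * C := mul_le_mul (hC α) (hC β) (norm_nonneg _) ((norm_nonneg _).trans (hC α))
    _ = C ^ 2 := (sq C).symm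

section

variable {𝕜 H Ω : Type*} [RCLike 𝕜] [NormedAddCommGroup H] [InnerProductSpace 𝕜 H]
  [MeasurableSpace Ω] {μ : Measure Ω} {τ : Ω → H}

theorem stronglyMeasurable_of_measurable_inner [FiniteDimensional 𝕜 H]
    (hτ : ∀ x, Measurable fun α => ⟪x, τ α⟫_𝕜) : StronglyMeasurable τ := by
  let b := stdOrthonormalBasis 𝕜 H
  have hsum : τ = fun α => ∑ i, ⟪b i, τ α⟫_𝕜 • b i := funext fun α => (b.sum_repr' (τ α)).symm
  rw [hsum]
  exact Finset.stronglyMeasurable_fun_sum _ fun i _ => (hτ (b i)).stronglyMeasurable.smul_const _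

theorem lintegral_norm_sq_le_of_bessel [FiniteDimensional 𝕜 H]
    (hτ : ∀ x, Measurable fun α => ⟪x, τ α⟫_𝕜) {B : ℝ}
    (hB : ∀ x, ∫⁻ α, ENNReal.ofReal (‖⟪x, τ α⟫_𝕜‖ ^ 2) ∂μ ≤ ENNReal.ofReal (B * ‖x‖ ^ 2)) :
    ∫⁻ α, ENNReal.ofReal (‖τ α‖ ^ 2) ∂μ ≤ Module.finrank 𝕜 H * ENNReal.ofReal B := by
  let b := stdOrthonormalBasis 𝕜 H
  calc ∫⁻ α, ENNReal.ofReal (‖τ α‖ ^ 2) ∂μ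
      = ∫⁻ α, ∑ i, ENNReal.ofReal (‖⟪b i, τ α⟫_𝕜‖ ^ 2) ∂μ := lintegral_congr fun α => by
        rw [← ENNReal.ofReal_sum_of_nonneg fun _ _ => by positivity, b.sum_sq_norm_inner_right]
    _ = ∑ i, ∫⁻ α, ENNReal.ofReal (‖⟪b i, τ α⟫_𝕜‖ ^ 2) ∂μ :=
        lintegral_finsetSum _ fun i _ => ((hτ (b i)).norm.pow_const 2).ennreal_ofReal
    _ ≤ ∑ _i, ENNReal.ofReal B := Finset.sum_le_sum fun i _ => by simpa using hB (b i)
    _ = Module.finrank 𝕜 H * ENNReal.ofReal B := by simp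

variable {C : ℝ}

theorem integrable_inner_mul_inner [IsFiniteMeasure μ] (hτ : StronglyMeasurable τ)
    (hC : ∀ α, ‖τ α‖ ≤ C) (x y : H) :
    Integrable (fun α => ⟪τ α, x⟫_𝕜 * ⟪y, τ α⟫_𝕜) μ := by
  refine .of_bound ((hτ.inner stronglyMeasurable_const).mul
    (stronglyMeasurable_const.inner hτ)).aestronglyMeasurable (‖x‖ * C * (‖y‖ * C))
    (.of_forall fun α => ?_)
  have hC0 : 0 ≤ C := (norm_nonneg _).trans (hC α)
  rw [norm_mul]
  gcongr
  · exact (norm_inner_le_norm _ _).trans (by rw [mul_comm]; gcongr; exact hC α)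
  · exact (norm_inner_le_norm _ _).trans (by gcongr; exact hC α)

theorem integrable_norm_inner_sq_prod [IsFiniteMeasure μ] (hτ : StronglyMeasurable τ)
    (hC : ∀ α, ‖τ α‖ ≤ C) :
    Integrable (fun p : Ω × Ω => ‖⟪τ p.1, τ p.2⟫_𝕜‖ ^ 2) (μ.prod μ) := by
  refine .of_bound (((hτ.comp_measurable measurable_fst).inner
    (hτ.comp_measurable measurable_snd)).norm.pow 2).aestronglyMeasurable ((C ^ 2) ^ 2)
    (.of_forall fun p => ?_)
  rw [norm_pow, norm_norm]
  exact pow_le_pow_left₀ (norm_nonneg _) (norm_inner_le_of_forall_norm_le hC _ _) 2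

theorem framePotential_eq_integral_prod [IsFiniteMeasure μ] (hτ : StronglyMeasurable τ)
    (hC : ∀ α, ‖τ α‖ ≤ C) :
    framePotential 𝕜 μ τ = ∫ p : Ω × Ω, ‖⟪τ p.1, τ p.2⟫_𝕜‖ ^ 2 ∂(μ.prod μ) :=
  (integral_prod _ (integrable_norm_inner_sq_prod hτ hC)).symm

theorem framePotential_nonneg : 0 ≤ framePotential 𝕜 μ τ :=
  integral_nonneg fun _ => integral_nonneg fun _ => sq_nonneg _

theorem framePotential_le [IsFiniteMeasure μ] (hC : ∀ α, ‖τ α‖ ≤ C) :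
    framePotential 𝕜 μ τ ≤ C ^ 4 * μ.real Set.univ ^ 2 := by
  have hbound : ∀ α β, ‖‖⟪τ α, τ β⟫_𝕜‖ ^ 2‖ ≤ C ^ 4 := fun α β => by
    rw [norm_pow, norm_norm, show C ^ 4 = (C ^ 2) ^ 2 by ring]
    exact pow_le_pow_left₀ (norm_nonneg _) (norm_inner_le_of_forall_norm_le hC α β) 2
  calc framePotential 𝕜 μ τ ≤ ‖framePotential 𝕜 μ τ‖ := Real.le_norm_self _
    _ ≤ C ^ 4 * μ.real Set.univ * μ.real Set.univ :=
        norm_integral_le_of_norm_le_const <| .of_forall fun α =>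
          norm_integral_le_of_norm_le_const <| .of_forall (hbound α)
    _ = C ^ 4 * μ.real Set.univ ^ 2 := by ring

theorem measureReal_diagonal_le_framePotential [IsFiniteMeasure μ] (hτ : StronglyMeasurable τ)
    (hnorm : ∀ α, ‖τ α‖ = 1) (hΔ : MeasurableSet {p : Ω × Ω | p.1 = p.2}) :
    (μ.prod μ).real {p : Ω × Ω | p.1 = p.2} ≤ framePotential 𝕜 μ τ := by
  have hC : ∀ α, ‖τ α‖ ≤ 1 := fun α => (hnorm α).le
  rw [framePotential_eq_integral_prod hτ hC, ← integral_indicator_one hΔ]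
  refine integral_mono ((integrable_const 1).indicator hΔ)
    (integrable_norm_inner_sq_prod hτ hC) fun p => ?_
  by_cases hp : p.1 = p.2
  · simp [← hp, hnorm]
  · rw [Set.indicator_of_notMem (s := {p : Ω × Ω | p.1 = p.2}) hp]
    positivity

theorem integral_prod_mul_conj [SFinite μ] (g : Ω → 𝕜) :
    ∫ p : Ω × Ω, g p.1 * conj (g p.2) ∂(μ.prod μ) = (‖∫ α, g α ∂μ‖ ^ 2 : 𝕜) := by
  rw [integral_prod_mul g (fun β => conj (g β)), integral_conj, RCLike.mul_conj]

theorem framePotential_eq_sum_norm_sq {ι : Type*} [Fintype ι] [IsFiniteMeasure μ]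
    (hτ : StronglyMeasurable τ) (hC : ∀ α, ‖τ α‖ ≤ C) (b : OrthonormalBasis ι 𝕜 H) :
    framePotential 𝕜 μ τ = ∑ i, ∑ j, ‖∫ α, ⟪τ α, b i⟫_𝕜 * ⟪b j, τ α⟫_𝕜 ∂μ‖ ^ 2 := by
  have hint : ∀ i j, Integrable (fun p : Ω × Ω =>
      ⟪τ p.1, b i⟫_𝕜 * ⟪b j, τ p.1⟫_𝕜 * conj (⟪τ p.2, b i⟫_𝕜 * ⟪b j, τ p.2⟫_𝕜)) (μ.prod μ) :=
    fun i j => by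
      have hconj : Integrable (fun β => conj (⟪τ β, b i⟫_𝕜 * ⟪b j, τ β⟫_𝕜)) μ :=
        (integrable_inner_mul_inner hτ hC (b j) (b i)).congr <| .of_forall fun β => by
          simp only [map_mul, inner_conj_symm, mul_comm]
      exact (integrable_inner_mul_inner hτ hC (b i) (b j)).mul_prod hconj
  apply RCLike.ofReal_injective (K := 𝕜)
  rw [framePotential_eq_integral_prod hτ hC, ← integral_ofReal]
  push_cast
  simp_rw [b.norm_inner_sq_eq_sum]
  rw [integral_finsetSum _ fun i _ => integrable_finsetSum _ fun j _ => hint i j]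
  refine Finset.sum_congr rfl fun i _ => ?_
  rw [integral_finsetSum _ fun j _ => hint i j]
  exact Finset.sum_congr rfl fun j _ =>
    integral_prod_mul_conj fun α => ⟪τ α, b i⟫_𝕜 * ⟪b j, τ α⟫_𝕜

theorem sq_integral_norm_sq_le_finrank_mul_framePotential [FiniteDimensional 𝕜 H]
    [IsFiniteMeasure μ] (hτ : StronglyMeasurable τ) (hC : ∀ α, ‖τ α‖ ≤ C) :
    (∫ α, ‖τ α‖ ^ 2 ∂μ) ^ 2 ≤ Module.finrank 𝕜 H * framePotential 𝕜 μ τ := by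
  let b := stdOrthonormalBasis 𝕜 H
  set G : Fin (Module.finrank 𝕜 H) → Fin (Module.finrank 𝕜 H) → 𝕜 :=
    fun i j => ∫ α, ⟪τ α, b i⟫_𝕜 * ⟪b j, τ α⟫_𝕜 ∂μ
  have htrace : ∑ i, G i i = ((∫ α, ‖τ α‖ ^ 2 ∂μ : ℝ) : 𝕜) := by
    rw [← integral_finsetSum _ fun i _ => integrable_inner_mul_inner hτ hC _ _,
      ← integral_ofReal]
    simp_rw [b.sum_inner_mul_inner, inner_self_eq_norm_sq_to_K, RCLike.ofReal_pow]
  rw [framePotential_eq_sum_norm_sq hτ hC b]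
  calc (∫ α, ‖τ α‖ ^ 2 ∂μ) ^ 2 = ‖∑ i, G i i‖ ^ 2 := by rw [htrace, RCLike.norm_ofReal, sq_abs]
    _ ≤ (∑ i, ‖G i i‖) ^ 2 := by gcongr; exact norm_sum_le _ _
    _ ≤ Module.finrank 𝕜 H * ∑ i, ‖G i i‖ ^ 2 := by
        simpa using sq_sum_le_card_mul_sum_sq (s := Finset.univ) (f := fun i => ‖G i i‖)
    _ ≤ Module.finrank 𝕜 H * ∑ i, ∑ j, ‖G i j‖ ^ 2 := by
        gcongr with i
        exact Finset.single_le_sum (f := fun j => ‖G i j‖ ^ 2) (fun _ _ => by positivity)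
          (Finset.mem_univ i)

end

theorem stmt_19_general
    {Ω : Type*} [MeasurableSpace Ω] (μ : Measure Ω)
    {H : Type*} [NormedAddCommGroup H] [InnerProductSpace ℂ H] [FiniteDimensional ℂ H]
    (τ : Ω → H) (b : ℝ)
    (hmeas : ∀ h : H, Measurable fun α => ⟪h, τ α⟫_ℂ)
    (hbessel : ∀ h : H,
      ∫⁻ α, ENNReal.ofReal (‖⟪h, τ α⟫_ℂ‖ ^ 2) ∂μ ≤ ENNReal.ofReal (b * ‖h‖ ^ 2))
    (hnorm : ∀ α, ‖τ α‖ = 1)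
    (hΔ : MeasurableSet {p : Ω × Ω | p.1 = p.2}) :
    max ((μ Set.univ).toReal ^ 2 / (Module.finrank ℂ H : ℝ))
        (((μ.prod μ) {p : Ω × Ω | p.1 = p.2}).toReal)
      ≤ ∫ α, ∫ β, ‖⟪τ α, τ β⟫_ℂ‖ ^ 2 ∂μ ∂μ
    ∧ ∫ α, ∫ β, ‖⟪τ α, τ β⟫_ℂ‖ ^ 2 ∂μ ∂μ ≤ (μ Set.univ).toReal ^ 2 := by
  change max (μ.real Set.univ ^ 2 / _) ((μ.prod μ).real _) ≤ framePotential ℂ μ τ ∧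
    framePotential ℂ μ τ ≤ μ.real Set.univ ^ 2
  have hτ := stronglyMeasurable_of_measurable_inner hmeas
  have hC : ∀ α, ‖τ α‖ ≤ 1 := fun α => (hnorm α).le
  have : IsFiniteMeasure μ := by
    have hμ := lintegral_norm_sq_le_of_bessel hmeas hbessel
    simp only [hnorm, one_pow, ENNReal.ofReal_one, lintegral_const, one_mul] at hμ
    exact ⟨hμ.trans_lt (by finiteness)⟩
  have hlower := sq_integral_norm_sq_le_finrank_mul_framePotential (𝕜 := ℂ) (μ := μ) hτ hC
  simp only [hnorm, one_pow, integral_const, smul_eq_mul, mul_one] at hlower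
  refine ⟨max_le ?_ (measureReal_diagonal_le_framePotential hτ hnorm hΔ), ?_⟩
  · exact div_le_of_le_mul₀ (Nat.cast_nonneg _) framePotential_nonneg (by rwa [mul_comm])
  · simpa using framePotential_le hC

/-- Bounds on the continuous frame potential:
`max{μ(Ω)²/d, (μ×μ)(Δ)} ≤ FP ≤ μ(Ω)²`. -/
theorem stmt_19
    {Ω : Type*} [MeasurableSpace Ω] (μ : Measure Ω)
    {H : Type*} [NormedAddCommGroup H] [InnerProductSpace ℂ H] [FiniteDimensional ℂ H]
    (hd : 0 < Module.finrank ℂ H)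
    (τ : Ω → H) (b : ℝ) (hb : 0 < b)
    (hmeas : ∀ h : H, Measurable fun α => ⟪h, τ α⟫_ℂ)
    (hbessel : ∀ h : H,
      ∫⁻ α, ENNReal.ofReal (‖⟪h, τ α⟫_ℂ‖ ^ 2) ∂μ ≤ ENNReal.ofReal (b * ‖h‖ ^ 2))
    (hnorm : ∀ α, ‖τ α‖ = 1)
    (hΔ : MeasurableSet {p : Ω × Ω | p.1 = p.2}) :
    max ((μ Set.univ).toReal ^ 2 / (Module.finrank ℂ H : ℝ))
        (((μ.prod μ) {p : Ω × Ω | p.1 = p.2}).toReal)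
      ≤ ∫ α, ∫ β, ‖⟪τ α, τ β⟫_ℂ‖ ^ 2 ∂μ ∂μ
    ∧ ∫ α, ∫ β, ‖⟪τ α, τ β⟫_ℂ‖ ^ 2 ∂μ ∂μ ≤ (μ Set.univ).toReal ^ 2 :=
  stmt_19_general μ τ b hmeas hbessel hnorm hΔ
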